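/- Let N, d, K be positive integers, let σ_1, …, σ_d : Fin N → Fin N be fixed-point-free involutions (permutations with σ_t ∘ σ_t = id and σ_t i ≠ i for all i), and for u : Fin N → Fin K and m, ℓ ∈ Fin K set Q_{m,ℓ}(u) = (1/N) ∑_{t=1}^d ∑_{i∈Fin N} 1{u i = m}·1{u(σ_t i) = ℓ}. Let n : Fin K → ℕ with ∑_k n_k = N, fix w : Fin N → Fin K whose fiber over each k has exactly n_k elements, let π be a uniformly distributed random permutation of Fin N, and set V = w ∘ π. Then for every ε > 0 there exist constants C, c > 0, depending only on ε and d (not on N, K, n, w, or the matchings), such that P( | Q_{m,ℓ}(V) − d·(n_m/N)·(n_ℓ/N) | > ε ) ≤ C·exp(−c N) for all m, ℓ ∈ Fin K. -/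

import Mathlib

/-!
Under the i.i.d. law in which each vertex draws its colour from the empirical frequencies of `w`,
a matching splits the vertices into independent pairs, so Hoeffding's lemma and a Chernoff bound
give a tail `2 exp (-(ε / d) ^ 2 N)` for the contribution of one matching, and a union bound
handles the `d` matchings. The uniformly rearranged colouring `w ∘ π` is this i.i.d. colouring
conditioned on its type class (the colourings with the same colour counts). By the method of
types, the type of `w` is the most likely one, so its class has i.i.d. probability at least
`(N + 1) ^ (-#colours)`. Coarsening to the four colours `(w i = m, w i = ℓ)` makes this
polynomial loss independent of `K`, and it is absorbed into the exponential.
-/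

open MeasureTheory ProbabilityTheory ENNReal Finset
open Real (exp exp_add exp_nat_mul exp_pos exp_sum one_le_exp pow_div_factorial_le_exp)

section MatchingReps

variable {α : Type*} [Fintype α] [LinearOrder α] {τ : α → α}

def matchingReps (τ : α → α) : Finset α := {i | i < τ i}

@[simp]
lemma mem_matchingReps {i : α} : i ∈ matchingReps τ ↔ i < τ i := by
  simp [matchingReps]

variable (hτ : Function.Involutive τ) (hfix : ∀ i, τ i ≠ i)
include hτ

lemma disjoint_matchingReps_image : Disjoint (matchingReps τ) ((matchingReps τ).image τ) := by
  simp only [disjoint_left, mem_image, mem_matchingReps, not_exists, not_and]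
  intro i hi j hj hji
  subst hji
  rw [hτ] at hi
  exact lt_asymm hi hj

include hfix in
lemma matchingReps_union_image : matchingReps τ ∪ (matchingReps τ).image τ = univ := by
  refine eq_univ_of_forall fun i => ?_
  simp only [mem_union, mem_image, mem_matchingReps]
  rcases (hfix i).lt_or_gt with h | h
  · exact Or.inr ⟨τ i, by rwa [hτ], hτ i⟩
  · exact Or.inl h

include hfix in
@[to_additive]
lemma prod_eq_prod_matchingReps_mul {M : Type*} [CommMonoid M] (f : α → M) :
    ∏ i, f i = ∏ a ∈ matchingReps τ, f a * f (τ a) := by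
  rw [← matchingReps_union_image hτ hfix, prod_union (disjoint_matchingReps_image hτ),
    prod_image (hτ.injective.injOn), prod_mul_distrib]

include hfix in
lemma card_eq_two_mul_card_matchingReps : Fintype.card α = 2 * #(matchingReps τ) := by
  have h := sum_eq_sum_matchingReps_add hτ hfix (fun _ => 1)
  simp only [sum_const, card_univ, smul_eq_mul, mul_one] at h
  lia

include hfix in
lemma sum_sub_card_mul_eq_sum_matchingReps (x : α → ℝ) (m : ℝ) :
    ∑ i, x i - Fintype.card α * m = ∑ a ∈ matchingReps τ, (x a + x (τ a) - 2 * m) := by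
  rw [sum_eq_sum_matchingReps_add hτ hfix, sum_sub_distrib, sum_const, nsmul_eq_mul,
    card_eq_two_mul_card_matchingReps hτ hfix]
  push_cast; ring

include hfix in
def matchingRepsEquiv (β : Type*) : (α → β) ≃ (matchingReps τ → β × β) where
  toFun c a := (c a, c (τ a))
  invFun h i := if hi : i < τ i then (h ⟨i, by simpa⟩).1 else
    (h ⟨τ i, by simpa [hτ i] using (not_lt.1 hi).lt_of_ne (hfix i)⟩).2
  left_inv c := by
    funext i
    by_cases hi : i < τ i <;> simp [hi, hτ i]
  right_inv h := by
    funext ⟨a, ha⟩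
    have ha' : a < τ a := by simpa using ha
    have hna : ¬ τ a < τ (τ a) := by rw [hτ]; exact ha'.not_gt
    ext
    · simp [ha']
    · simp only [hna, dite_false]
      congr 2
      simp [hτ a]

include hfix in
lemma sum_prod_matchingReps {β R : Type*} [Fintype β] [CommSemiring R] (H : β → β → R) :
    ∑ c : α → β, ∏ a ∈ matchingReps τ, H (c a) (c (τ a)) =
      (∑ p : β × β, H p.1 p.2) ^ #(matchingReps τ) := by
  classical
  calc ∑ c : α → β, ∏ a ∈ matchingReps τ, H (c a) (c (τ a))
      = ∑ c : α → β, ∏ a : matchingReps τ,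
          (fun p : β × β => H p.1 p.2) (matchingRepsEquiv hτ hfix β c a) := by
        simp only [← prod_coe_sort (matchingReps τ)]; rfl
    _ = ∏ _a : matchingReps τ, ∑ p : β × β, H p.1 p.2 := by
        rw [Equiv.sum_comp (matchingRepsEquiv hτ hfix β) (fun h => ∏ a, H (h a).1 (h a).2),
          Fintype.prod_sum]
    _ = _ := by simp

end MatchingReps

namespace Finset

lemma sum_filter_lt_le_exp_mul_sum {ι : Type*} (s : Finset ι) {w : ι → ℝ} (X : ι → ℝ)
    (hw : ∀ i ∈ s, 0 ≤ w i) (t : ℝ) {u : ℝ} (hu : 0 ≤ u) :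
    ∑ i ∈ s with t < X i, w i ≤ exp (-(u * t)) * ∑ i ∈ s, w i * exp (u * X i) := by
  rw [mul_sum]
  calc ∑ i ∈ s with t < X i, w i
      ≤ ∑ i ∈ s with t < X i, exp (-(u * t)) * (w i * exp (u * X i)) := by
        refine sum_le_sum fun i hi => ?_
        obtain ⟨his, hti⟩ := mem_filter.1 hi
        have h1 : 1 ≤ exp (-(u * t)) * exp (u * X i) := by
          rw [← exp_add]
          exact one_le_exp (by nlinarith)
        nlinarith [hw i his]
    _ ≤ ∑ i ∈ s, exp (-(u * t)) * (w i * exp (u * X i)) :=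
        sum_le_sum_of_subset_of_nonneg (filter_subset _ _) fun i hi _ =>
          mul_nonneg (exp_pos _).le (mul_nonneg (hw i hi) (exp_pos _).le)

lemma sum_filter_exists_le {ι κ : Type*} (s : Finset ι) (T : Finset κ) (P : κ → ι → Prop)
    [∀ t, DecidablePred (P t)] [DecidablePred fun i => ∃ t ∈ T, P t i] {w : ι → ℝ}
    (hw : ∀ i ∈ s, 0 ≤ w i) :
    ∑ i ∈ s with ∃ t ∈ T, P t i, w i ≤ ∑ t ∈ T, ∑ i ∈ s with P t i, w i := by
  simp_rw [sum_filter]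
  rw [sum_comm]
  refine sum_le_sum fun i hi => ?_
  have hterm (t : κ) : 0 ≤ if P t i then w i else 0 := by split_ifs <;> simp [hw i hi]
  split_ifs with h
  · obtain ⟨t, ht, hP⟩ := h
    calc w i = if P t i then w i else 0 := (if_pos hP).symm
      _ ≤ _ := single_le_sum (fun t _ => hterm t) ht
  · exact sum_nonneg fun t _ => hterm t

lemma sum_filter_or_le {ι : Type*} (s : Finset ι) (P Q : ι → Prop)
    [DecidablePred P] [DecidablePred Q] {w : ι → ℝ} (hw : ∀ i ∈ s, 0 ≤ w i) :
    ∑ i ∈ s with P i ∨ Q i, w i ≤ ∑ i ∈ s with P i, w i + ∑ i ∈ s with Q i, w i := by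
  classical
  rw [filter_or, ← sum_union_inter]
  exact le_add_of_nonneg_right <| sum_nonneg fun i hi =>
    hw i (mem_filter.1 (mem_inter.1 hi).1).1

lemma exists_lt_abs_of_lt_abs_sum {ι : Type*} {s : Finset ι} (hs : s.Nonempty)
    {x : ι → ℝ} {r : ℝ} (h : r < |∑ i ∈ s, x i|) : ∃ i ∈ s, r / #s < |x i| := by
  refine exists_lt_of_sum_lt ?_
  rw [sum_const, nsmul_eq_mul, mul_div_cancel₀ _ (by exact_mod_cast hs.card_pos.ne')]
  exact h.trans_le (abs_sum_le_sum_abs _ _)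

end Finset

/-- Hoeffding's lemma for a finitely supported law `q`. -/
lemma sum_mul_exp_le_of_mem_Icc {γ : Type*} [Fintype γ] {q Y : γ → ℝ} (hq0 : ∀ x, 0 ≤ q x)
    (hq1 : ∑ x, q x = 1) {a b : ℝ} (hY : ∀ x, Y x ∈ Set.Icc a b) (hmean : ∑ x, q x * Y x = 0)
    (t : ℝ) : ∑ x, q x * exp (t * Y x) ≤ exp ((b - a) ^ 2 / 8 * t ^ 2) := by
  let _ : MeasurableSpace γ := ⊤
  let p : PMF γ := PMF.ofFintype (fun x => ENNReal.ofReal (q x)) <| by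
    rw [← ENNReal.ofReal_sum_of_nonneg fun x _ => hq0 x, hq1, ENNReal.ofReal_one]
  have hint (f : γ → ℝ) : ∫ x, f x ∂p.toMeasure = ∑ x, q x * f x := by
    simp [p, PMF.integral_eq_sum, ENNReal.toReal_ofReal (hq0 _)]
  have h := (hasSubgaussianMGF_of_mem_Icc_of_integral_eq_zero (μ := p.toMeasure)
    (measurable_of_finite Y).aemeasurable (ae_of_all _ hY) (by rw [hint]; exact hmean)).mgf_le t
  rw [mgf, hint] at h
  convert h using 2
  push_cast
  simp [div_pow]
  ring

lemma sum_prod_mul_eq_one {β : Type*} [Fintype β] {ρ : β → ℝ} (hρ1 : ∑ j, ρ j = 1) :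
    ∑ p : β × β, ρ p.1 * ρ p.2 = 1 := by
  rw [Fintype.sum_prod_type, ← sum_mul_sum, hρ1, one_mul]

section IidWeight

variable {α β : Type*} [Fintype α]

def iidWeight (ρ : β → ℝ) (c : α → β) : ℝ := ∏ i, ρ (c i)

lemma iidWeight_nonneg {ρ : β → ℝ} (hρ : ∀ j, 0 ≤ ρ j) (c : α → β) : 0 ≤ iidWeight ρ c :=
  prod_nonneg fun _ _ => hρ _

lemma sum_iidWeight [DecidableEq α] [Fintype β] (ρ : β → ℝ) :
    ∑ c : α → β, iidWeight ρ c = (∑ j, ρ j) ^ Fintype.card α := by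
  simp only [iidWeight, ← Fintype.prod_sum, prod_const, card_univ]

variable [Fintype β] [LinearOrder α] {τ : α → α} (hτ : Function.Involutive τ) (hfix : ∀ i, τ i ≠ i)
include hτ hfix

lemma sum_iidWeight_mul_exp_sum_matchingReps (ρ : β → ℝ) (Y : β → β → ℝ) (s : ℝ) :
    ∑ c : α → β, iidWeight ρ c * exp (s * ∑ i ∈ matchingReps τ, Y (c i) (c (τ i))) =
      (∑ p : β × β, ρ p.1 * ρ p.2 * exp (s * Y p.1 p.2)) ^ #(matchingReps τ) := by
  have hsplit (c : α → β) :
      iidWeight ρ c * exp (s * ∑ i ∈ matchingReps τ, Y (c i) (c (τ i))) =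
        ∏ i ∈ matchingReps τ, ρ (c i) * ρ (c (τ i)) * exp (s * Y (c i) (c (τ i))) := by
    rw [iidWeight, prod_eq_prod_matchingReps_mul hτ hfix (fun i => ρ (c i)), mul_sum, exp_sum,
      ← prod_mul_distrib]
  simp_rw [hsplit]
  exact sum_prod_matchingReps hτ hfix (fun u v => ρ u * ρ v * exp (s * Y u v))

lemma sum_iidWeight_filter_lt_sum_matchingReps_le {ρ : β → ℝ} (hρ0 : ∀ j, 0 ≤ ρ j)
    (hρ1 : ∑ j, ρ j = 1) {Y : β → β → ℝ} {a b : ℝ} (hY : ∀ u v, Y u v ∈ Set.Icc a b)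
    (hmean : ∑ p : β × β, ρ p.1 * ρ p.2 * Y p.1 p.2 = 0) (t : ℝ) {s : ℝ} (hs : 0 ≤ s) :
    ∑ c with t < ∑ i ∈ matchingReps τ, Y (c i) (c (τ i)), iidWeight ρ c ≤
      exp (-(s * t) + (b - a) ^ 2 / 8 * s ^ 2 * #(matchingReps τ)) := by
  have hq0 (p : β × β) : 0 ≤ ρ p.1 * ρ p.2 := mul_nonneg (hρ0 _) (hρ0 _)
  have hmgf := sum_mul_exp_le_of_mem_Icc hq0 (sum_prod_mul_eq_one hρ1) (fun p => hY p.1 p.2)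
    hmean s
  calc ∑ c with t < ∑ i ∈ matchingReps τ, Y (c i) (c (τ i)), iidWeight ρ c
      ≤ exp (-(s * t)) * ∑ c : α → β,
          iidWeight ρ c * exp (s * ∑ i ∈ matchingReps τ, Y (c i) (c (τ i))) :=
        sum_filter_lt_le_exp_mul_sum _ _ (fun c _ => iidWeight_nonneg hρ0 c) t hs
    _ ≤ exp (-(s * t)) * exp ((b - a) ^ 2 / 8 * s ^ 2) ^ #(matchingReps τ) := by
        rw [sum_iidWeight_mul_exp_sum_matchingReps hτ hfix]
        gcongr
        exact sum_nonneg fun p _ => mul_nonneg (hq0 p) (exp_pos _).le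
    _ = _ := by rw [← exp_nat_mul, ← exp_add]; ring_nf

lemma sum_iidWeight_filter_lt_abs_sum_sub_le {ρ : β → ℝ} (hρ0 : ∀ j, 0 ≤ ρ j)
    (hρ1 : ∑ j, ρ j = 1) {φ : β → β → ℝ} (hφ : ∀ u v, φ u v ∈ Set.Icc 0 1) {δ : ℝ} (hδ : 0 ≤ δ) :
    ∑ c with δ * Fintype.card α <
        |∑ i, φ (c i) (c (τ i)) - Fintype.card α * ∑ p : β × β, ρ p.1 * ρ p.2 * φ p.1 p.2|,
      iidWeight ρ c ≤ 2 * exp (-(δ ^ 2 * Fintype.card α)) := by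
  set m := ∑ p : β × β, ρ p.1 * ρ p.2 * φ p.1 p.2
  -- The pair `{i, τ i}` contributes `Y (c i) (c (τ i))`, centred with a range of width 2;
  -- `s = 2 δ` below is the optimal Chernoff parameter for both tails.
  set Y : β → β → ℝ := fun u v => φ u v + φ v u - 2 * m
  have hY (u v : β) : Y u v ∈ Set.Icc (-2 * m) (2 - 2 * m) := by
    obtain ⟨h₁, h₂⟩ := hφ u v
    obtain ⟨h₃, h₄⟩ := hφ v u
    constructor <;> linarith
  have hY' (u v : β) : -Y u v ∈ Set.Icc (-(2 - 2 * m)) (-(-2 * m)) :=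
    ⟨neg_le_neg (hY u v).2, neg_le_neg (hY u v).1⟩
  have hmean : ∑ p : β × β, ρ p.1 * ρ p.2 * Y p.1 p.2 = 0 := by
    have hswap : ∑ p : β × β, ρ p.1 * ρ p.2 * φ p.2 p.1 = m :=
      (Equiv.prodComm β β).sum_comp (fun p => ρ p.2 * ρ p.1 * φ p.1 p.2) ▸ by
        simp_rw [mul_comm (ρ _) (ρ _)]; rfl
    simp only [Y, mul_sub, mul_add, sum_add_distrib, sum_sub_distrib, hswap]
    rw [← sum_mul, sum_prod_mul_eq_one hρ1]; ring
  have hmean' : ∑ p : β × β, ρ p.1 * ρ p.2 * -Y p.1 p.2 = 0 := by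
    simp only [mul_neg, sum_neg_distrib, hmean, neg_zero]
  have hupper := sum_iidWeight_filter_lt_sum_matchingReps_le hτ hfix hρ0 hρ1 hY hmean
    (δ * Fintype.card α) (s := 2 * δ) (by positivity)
  have hlower := sum_iidWeight_filter_lt_sum_matchingReps_le hτ hfix hρ0 hρ1 hY' hmean'
    (δ * Fintype.card α) (s := 2 * δ) (by positivity)
  simp only [sum_neg_distrib] at hlower
  simp_rw [sum_sub_card_mul_eq_sum_matchingReps hτ hfix, hτ _, lt_abs]
  refine (sum_filter_or_le _ _ _ fun c _ => iidWeight_nonneg hρ0 c).trans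
    ((add_le_add hupper hlower).trans (le_of_eq ?_))
  rw [card_eq_two_mul_card_matchingReps hτ hfix]; push_cast; ring_nf

end IidWeight

lemma sum_iidWeight_filter_lt_abs_sum_matchings_sub_le {α β : Type*} [Fintype α] [LinearOrder α]
    [Fintype β] (hα : 0 < Fintype.card α) {d : ℕ} (hd : 0 < d) {σ : Fin d → α → α}
    (hσ : ∀ t, Function.Involutive (σ t)) (hfix : ∀ t i, σ t i ≠ i) {ρ : β → ℝ}
    (hρ0 : ∀ j, 0 ≤ ρ j) (hρ1 : ∑ j, ρ j = 1) {φ : β → β → ℝ} (hφ : ∀ u v, φ u v ∈ Set.Icc 0 1)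
    {ε : ℝ} (hε : 0 ≤ ε) :
    ∑ c with ε < |1 / (Fintype.card α : ℝ) * ∑ t, ∑ i, φ (c i) (c (σ t i)) -
        d * ∑ p : β × β, ρ p.1 * ρ p.2 * φ p.1 p.2|,
      iidWeight ρ c ≤ 2 * d * exp (-((ε / d) ^ 2 * Fintype.card α)) := by
  set N : ℝ := (Fintype.card α : ℝ)
  set m := ∑ p : β × β, ρ p.1 * ρ p.2 * φ p.1 p.2
  have hN : 0 < N := Nat.cast_pos.2 hα
  have hbad (c : α → β) (hc : ε < |1 / N * ∑ t, ∑ i, φ (c i) (c (σ t i)) - d * m|) :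
      ∃ t ∈ univ, ε / d * N < |∑ i, φ (c i) (c (σ t i)) - N * m| := by
    have hsum : ε * N < |∑ t : Fin d, (∑ i, φ (c i) (c (σ t i)) - N * m)| := by
      have hrw : 1 / N * ∑ t, ∑ i, φ (c i) (c (σ t i)) - d * m =
          (∑ t : Fin d, (∑ i, φ (c i) (c (σ t i)) - N * m)) / N := by
        rw [sum_sub_distrib, sum_const, card_univ, Fintype.card_fin, nsmul_eq_mul]
        field_simp
      rwa [hrw, abs_div, abs_of_pos hN, lt_div_iff₀ hN] at hc
    obtain ⟨t, -, hlt⟩ := exists_lt_abs_of_lt_abs_sum (univ_nonempty_iff.2 ⟨⟨0, hd⟩⟩) hsum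
    refine ⟨t, mem_univ t, ?_⟩
    rwa [card_univ, Fintype.card_fin, mul_div_right_comm] at hlt
  calc ∑ c with ε < |1 / N * ∑ t, ∑ i, φ (c i) (c (σ t i)) - d * m|, iidWeight ρ c
      ≤ ∑ c with ∃ t ∈ univ, ε / d * N < |∑ i, φ (c i) (c (σ t i)) - N * m|, iidWeight ρ c :=
        sum_le_sum_of_subset_of_nonneg
          (fun c hc => mem_filter.2 ⟨mem_univ c, hbad c (mem_filter.1 hc).2⟩)
          (fun c _ _ => iidWeight_nonneg hρ0 c)
    _ ≤ ∑ t : Fin d, ∑ c with ε / d * N < |∑ i, φ (c i) (c (σ t i)) - N * m|, iidWeight ρ c :=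
        sum_filter_exists_le _ _ _ fun c _ => iidWeight_nonneg hρ0 c
    _ ≤ ∑ _t : Fin d, 2 * exp (-((ε / d) ^ 2 * N)) := sum_le_sum fun t _ =>
        sum_iidWeight_filter_lt_abs_sum_sub_le (hσ t) (hfix t) hρ0 hρ1 hφ (by positivity)
    _ = 2 * d * exp (-((ε / d) ^ 2 * N)) := by
        rw [sum_const, card_univ, Fintype.card_fin, nsmul_eq_mul]; ring

open Nat in
lemma Nat.factorial_mul_pow_le_factorial_mul_pow (n a : ℕ) : n ! * n ^ a ≤ a ! * n ^ n := by
  rcases le_total a n with h | h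
  · have hdesc := Nat.factorial_mul_descFactorial (Nat.sub_le n a)
    rw [Nat.sub_sub_self h] at hdesc
    calc n ! * n ^ a = a ! * n.descFactorial (n - a) * n ^ a := by rw [hdesc]
      _ ≤ a ! * n ^ (n - a) * n ^ a := by gcongr; exact Nat.descFactorial_le_pow n _
      _ = a ! * n ^ n := by rw [mul_assoc, ← pow_add, Nat.sub_add_cancel h]
  · obtain ⟨k, rfl⟩ := Nat.exists_eq_add_of_le h
    calc n ! * n ^ (n + k) = n ! * n ^ k * n ^ n := by ring
      _ ≤ n ! * (n + 1) ^ k * n ^ n := by gcongr; lia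
      _ ≤ (n + k)! * n ^ n := by gcongr; exact Nat.factorial_mul_pow_le_factorial

section ColorClass

variable {α β : Type*} [Fintype α] [DecidableEq β]

def colorCount (c : α → β) (j : β) : ℕ := #{i | c i = j}

lemma colorCount_comp_perm (c : α → β) (e : Equiv.Perm α) : colorCount (c ∘ e) = colorCount c := by
  funext j
  exact card_equiv e (by simp)

lemma colorCount_le_card (c : α → β) (j : β) : colorCount c j ≤ Fintype.card α :=
  card_filter_le _ _

lemma exists_perm_comp_eq {c g : α → β} (h : colorCount c = colorCount g) :
    ∃ e : Equiv.Perm α, g ∘ e = c := by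
  have hfib (j : β) : Fintype.card {i // c i = j} = Fintype.card {i // g i = j} := by
    simpa [Fintype.card_subtype, colorCount] using congrFun h j
  exact ⟨Equiv.ofFiberEquiv fun j => Fintype.equivOfCardEq (hfib j),
    funext (Equiv.ofFiberEquiv_map _)⟩

noncomputable def empiricalLaw (g : α → β) (j : β) : ℝ := colorCount g j / Fintype.card α

lemma empiricalLaw_nonneg (g : α → β) (j : β) : 0 ≤ empiricalLaw g j := by
  unfold empiricalLaw; positivity

variable [Fintype β]

lemma iidWeight_eq_prod_pow_colorCount (ρ : β → ℝ) (c : α → β) :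
    iidWeight ρ c = ∏ j, ρ j ^ colorCount c j := by
  rw [iidWeight, ← prod_fiberwise univ c]
  refine prod_congr rfl fun j _ => ?_
  rw [prod_congr rfl fun i hi => congrArg ρ (mem_filter.1 hi).2, prod_const]
  rfl

lemma sum_colorCount (c : α → β) : ∑ j, colorCount c j = Fintype.card α :=
  (card_eq_sum_card_fiberwise fun i _ => mem_univ (c i)).symm

lemma sum_empiricalLaw (hα : 0 < Fintype.card α) (g : α → β) : ∑ j, empiricalLaw g j = 1 := by
  simp only [empiricalLaw, ← sum_div]
  rw [← Nat.cast_sum, sum_colorCount, div_self (by positivity)]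

lemma sum_empiricalLaw_mul (g : α → β) (f : β → ℝ) :
    ∑ j, empiricalLaw g j * f j = (∑ i, f (g i)) / Fintype.card α := by
  simp only [empiricalLaw, div_mul_eq_mul_div, ← sum_div]
  rw [← sum_fiberwise univ g]
  congr 1
  refine sum_congr rfl fun j _ => ?_
  rw [sum_congr rfl fun i hi => congrArg f (mem_filter.1 hi).2, sum_const, nsmul_eq_mul]
  rfl

variable [DecidableEq α]

def colorClass (g : α → β) : Finset (α → β) := {c | colorCount c = colorCount g}

lemma card_filter_perm_comp_eq {c g : α → β} (h : colorCount c = colorCount g) :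
    #{e : Equiv.Perm α | g ∘ e = c} = ∏ j, (colorCount g j).factorial := by
  obtain ⟨e₀, rfl⟩ := exists_perm_comp_eq h
  calc #{e : Equiv.Perm α | g ∘ e = g ∘ e₀} = #{e : Equiv.Perm α | g ∘ e = g} := by
        refine card_equiv (Equiv.mulRight e₀⁻¹) fun e => ?_
        simp only [mem_filter, mem_univ, true_and, Equiv.coe_mulRight]
        constructor
        · intro he
          funext x
          simpa using congrFun he (e₀⁻¹ x)
        · intro he
          funext x
          simpa using congrFun he (e₀ x)
    _ = ∏ j, (colorCount g j).factorial := by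
        rw [← Fintype.card_subtype, DomMulAct.stabilizer_card]
        simp [colorCount, Fintype.card_subtype]

-- The fibres of `e ↦ g ∘ e` over the class of `g` are cosets of the stabiliser of `g`.
lemma card_filter_perm_comp (g : α → β) (P : (α → β) → Prop) [DecidablePred P] :
    #{e : Equiv.Perm α | P (g ∘ e)} =
      #{c ∈ colorClass g | P c} * ∏ j, (colorCount g j).factorial := by
  rw [card_eq_sum_card_fiberwise (f := fun e : Equiv.Perm α => g ∘ e)
    (t := {c ∈ colorClass g | P c}) fun e he => by
      simpa [colorClass, colorCount_comp_perm] using he]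
  rw [← smul_eq_mul, ← sum_const]
  refine sum_congr rfl fun c hc => ?_
  simp only [colorClass, mem_filter, mem_univ, true_and] at hc
  rw [← card_filter_perm_comp_eq hc.1]
  congr 1
  ext e
  simp only [mem_filter, mem_univ, true_and, and_iff_right_iff_imp]
  rintro rfl
  exact hc.2

lemma card_colorClass_mul (g : α → β) :
    #(colorClass g) * ∏ j, (colorCount g j).factorial = (Fintype.card α).factorial := by
  simpa [Fintype.card_perm] using (card_filter_perm_comp g fun _ => True).symm

lemma iidWeight_of_mem_colorClass (ρ : β → ℝ) {c g : α → β} (hc : c ∈ colorClass g) :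
    iidWeight ρ c = ∏ j, ρ j ^ colorCount g j := by
  simp only [colorClass, mem_filter, mem_univ, true_and] at hc
  rw [iidWeight_eq_prod_pow_colorCount, hc]

lemma sum_iidWeight_colorClass (ρ : β → ℝ) (c : α → β) :
    ∑ c' ∈ colorClass c, iidWeight ρ c' = #(colorClass c) * ∏ j, ρ j ^ colorCount c j := by
  rw [sum_congr rfl fun c' => iidWeight_of_mem_colorClass ρ, sum_const, nsmul_eq_mul]

lemma sum_iidWeight_empiricalLaw_colorClass (g c : α → β) :
    ∑ c' ∈ colorClass c, iidWeight (empiricalLaw g) c' =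
      (#(colorClass c) * ∏ j, colorCount g j ^ colorCount c j : ℕ) /
        (Fintype.card α : ℝ) ^ Fintype.card α := by
  rw [sum_iidWeight_colorClass]
  simp only [empiricalLaw, div_pow]
  rw [Finset.prod_div_distrib, prod_pow_eq_pow_sum, sum_colorCount]
  push_cast
  ring

/-- The type of `g` is a mode of the multinomial law with cell probabilities
`colorCount g j / card α`. -/
lemma card_colorClass_mul_prod_pow_le (c g : α → β) :
    #(colorClass c) * ∏ j, colorCount g j ^ colorCount c j ≤
      #(colorClass g) * ∏ j, colorCount g j ^ colorCount g j := by
  have hpos : 0 < (∏ j, (colorCount c j).factorial) * ∏ j, (colorCount g j).factorial := by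
    positivity
  refine Nat.le_of_mul_le_mul_right ?_ hpos
  calc (#(colorClass c) * ∏ j, colorCount g j ^ colorCount c j) *
        ((∏ j, (colorCount c j).factorial) * ∏ j, (colorCount g j).factorial)
      = (Fintype.card α).factorial *
          ∏ j, (colorCount g j).factorial * colorCount g j ^ colorCount c j := by
        rw [← card_colorClass_mul c, prod_mul_distrib]; ring
    _ ≤ (Fintype.card α).factorial *
          ∏ j, (colorCount c j).factorial * colorCount g j ^ colorCount g j := by
        exact Nat.mul_le_mul_left _
          (prod_le_prod' fun j _ => Nat.factorial_mul_pow_le_factorial_mul_pow _ _)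
    _ = (#(colorClass g) * ∏ j, colorCount g j ^ colorCount g j) *
        ((∏ j, (colorCount c j).factorial) * ∏ j, (colorCount g j).factorial) := by
        rw [← card_colorClass_mul g, prod_mul_distrib]; ring

lemma one_le_pow_mul_sum_iidWeight_colorClass (hα : 0 < Fintype.card α) (g : α → β) :
    1 ≤ ((Fintype.card α : ℝ) + 1) ^ Fintype.card β *
      ∑ c ∈ colorClass g, iidWeight (empiricalLaw g) c := by
  set N := Fintype.card α
  set T : (α → β) → ℝ := fun c => ∑ c' ∈ colorClass c, iidWeight (empiricalLaw g) c'
  have hmode (c : α → β) : T c ≤ T g := by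
    simp only [T, sum_iidWeight_empiricalLaw_colorClass]
    exact div_le_div_of_nonneg_right (by exact_mod_cast card_colorClass_mul_prod_pow_le c g)
      (by positivity)
  have htypes : #(univ.image (colorCount : (α → β) → β → ℕ)) ≤ (N + 1) ^ Fintype.card β := by
    calc #(univ.image (colorCount : (α → β) → β → ℕ))
        ≤ #(Fintype.piFinset fun _ : β => range (N + 1)) := by
          refine card_le_card fun v hv => ?_
          obtain ⟨c, -, rfl⟩ := mem_image.1 hv
          simpa [Nat.lt_succ_iff] using colorCount_le_card c
      _ = (N + 1) ^ Fintype.card β := by simp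
  calc (1 : ℝ) = ∑ c, iidWeight (empiricalLaw g) c := by
        rw [sum_iidWeight, sum_empiricalLaw hα, one_pow]
    _ = ∑ v ∈ univ.image colorCount, ∑ c with colorCount c = v, iidWeight (empiricalLaw g) c :=
        (sum_fiberwise_of_maps_to (fun c _ => mem_image_of_mem _ (mem_univ c)) _).symm
    _ ≤ ∑ _v ∈ univ.image (colorCount : (α → β) → β → ℕ), T g := sum_le_sum fun v hv => by
        obtain ⟨c, -, rfl⟩ := mem_image.1 hv
        exact hmode c
    _ ≤ _ := by
        rw [sum_const, nsmul_eq_mul]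
        exact mul_le_mul_of_nonneg_right (by exact_mod_cast htypes)
          (sum_nonneg fun c _ => iidWeight_nonneg (empiricalLaw_nonneg g) c)

lemma card_filter_perm_comp_le (hα : 0 < Fintype.card α) (g : α → β) (P : (α → β) → Prop)
    [DecidablePred P] :
    (#{e : Equiv.Perm α | P (g ∘ e)} : ℝ) ≤ ((Fintype.card α : ℝ) + 1) ^ Fintype.card β *
      (Fintype.card α).factorial * ∑ c with P c, iidWeight (empiricalLaw g) c := by
  set ρ := empiricalLaw g
  set w₀ := ∏ j, ρ j ^ colorCount g j
  set F := ∏ j, (colorCount g j).factorial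
  set k := ((Fintype.card α : ℝ) + 1) ^ Fintype.card β
  have hcount : (#{e : Equiv.Perm α | P (g ∘ e)} : ℝ) = #{c ∈ colorClass g | P c} * F := by
    exact_mod_cast card_filter_perm_comp g P
  have hfact : ((Fintype.card α).factorial : ℝ) = #(colorClass g) * F := by
    exact_mod_cast (card_colorClass_mul g).symm
  have hlow : 1 ≤ k * (#(colorClass g) * w₀) := by
    simpa [sum_iidWeight_colorClass] using one_le_pow_mul_sum_iidWeight_colorClass hα g
  have hbad : #{c ∈ colorClass g | P c} * w₀ ≤ ∑ c with P c, iidWeight ρ c := by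
    calc #{c ∈ colorClass g | P c} * w₀ = ∑ c ∈ colorClass g with P c, iidWeight ρ c := by
          rw [sum_congr rfl fun c hc => iidWeight_of_mem_colorClass ρ (mem_filter.1 hc).1,
            sum_const, nsmul_eq_mul]
      _ ≤ ∑ c with P c, iidWeight ρ c :=
          sum_le_sum_of_subset_of_nonneg (filter_subset_filter _ (subset_univ _))
            fun c _ _ => iidWeight_nonneg (empiricalLaw_nonneg g) c
  calc (#{e : Equiv.Perm α | P (g ∘ e)} : ℝ)
      ≤ #{c ∈ colorClass g | P c} * F * (k * (#(colorClass g) * w₀)) := by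
        rw [hcount]; exact le_mul_of_one_le_right (by positivity) hlow
    _ = k * (#(colorClass g) * F) * (#{c ∈ colorClass g | P c} * w₀) := by ring
    _ ≤ k * (Fintype.card α).factorial * ∑ c with P c, iidWeight ρ c := by
        rw [hfact]; gcongr

end ColorClass

theorem card_filter_perm_lt_abs_sum_matchings_sub_le {α β : Type*} [Fintype α] [LinearOrder α]
    [Fintype β] [DecidableEq β] (hα : 0 < Fintype.card α) {d : ℕ} (hd : 0 < d)
    {σ : Fin d → α → α} (hσ : ∀ t, Function.Involutive (σ t)) (hfix : ∀ t i, σ t i ≠ i)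
    (g : α → β) {φ : β → β → ℝ} (hφ : ∀ u v, φ u v ∈ Set.Icc 0 1) {ε : ℝ} (hε : 0 ≤ ε) :
    (#{e : Equiv.Perm α | ε < |1 / (Fintype.card α : ℝ) * ∑ t, ∑ i, φ (g (e i)) (g (e (σ t i))) -
        d * ∑ p : β × β, empiricalLaw g p.1 * empiricalLaw g p.2 * φ p.1 p.2|} : ℝ) ≤
      ((Fintype.card α : ℝ) + 1) ^ Fintype.card β * (Fintype.card α).factorial *
        (2 * d * exp (-((ε / d) ^ 2 * Fintype.card α))) := by
  refine (card_filter_perm_comp_le hα g fun c => ε < |1 / (Fintype.card α : ℝ) *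
    ∑ t, ∑ i, φ (c i) (c (σ t i)) -
      d * ∑ p : β × β, empiricalLaw g p.1 * empiricalLaw g p.2 * φ p.1 p.2|).trans ?_
  gcongr
  exact sum_iidWeight_filter_lt_abs_sum_matchings_sub_le hα hd hσ hfix (empiricalLaw_nonneg g)
    (sum_empiricalLaw hα g) hφ hε

/-- The paper's quadratic interaction count `Q_{m,ℓ}(u)` along the matchings `σ`. -/
noncomputable def interactionCount {α γ : Type*} [Fintype α] [DecidableEq γ] {d : ℕ}
    (σ : Fin d → α → α) (u : α → γ) (m ℓ : γ) : ℝ :=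
  1 / (Fintype.card α : ℝ) * ∑ t, ∑ i, (if u i = m then 1 else 0) * (if u (σ t i) = ℓ then 1 else 0)

theorem card_filter_perm_lt_abs_interactionCount_sub_le {α γ : Type*} [Fintype α] [LinearOrder α]
    [DecidableEq γ] (hα : 0 < Fintype.card α) {d : ℕ} (hd : 0 < d) {σ : Fin d → α → α}
    (hσ : ∀ t, Function.Involutive (σ t)) (hfix : ∀ t i, σ t i ≠ i) (w : α → γ) (m ℓ : γ)
    {ε : ℝ} (hε : 0 ≤ ε) :
    (#{e : Equiv.Perm α | ε < |interactionCount σ (w ∘ e) m ℓ -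
        d * (#{i | w i = m} / Fintype.card α) * (#{i | w i = ℓ} / Fintype.card α)|} : ℝ) ≤
      ((Fintype.card α : ℝ) + 1) ^ 4 * (Fintype.card α).factorial *
        (2 * d * exp (-((ε / d) ^ 2 * Fintype.card α))) := by
  set g : α → Bool × Bool := fun i => (decide (w i = m), decide (w i = ℓ))
  set φ : Bool × Bool → Bool × Bool → ℝ :=
    fun u v => (if u.1 then 1 else 0) * (if v.2 then 1 else 0)
  have hφ (u v : Bool × Bool) : φ u v ∈ Set.Icc 0 1 := by
    simp only [φ]; split_ifs <;> norm_num
  have hmean : ∑ p : (Bool × Bool) × (Bool × Bool),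
      empiricalLaw g p.1 * empiricalLaw g p.2 * φ p.1 p.2 =
        (#{i | w i = m} / Fintype.card α) * (#{i | w i = ℓ} / Fintype.card α) := by
    have hF : ∑ u : Bool × Bool, empiricalLaw g u * (if u.1 then 1 else 0 : ℝ) =
        #{i | w i = m} / Fintype.card α := by
      rw [sum_empiricalLaw_mul]; simp [g, sum_boole]
    have hG : ∑ u : Bool × Bool, empiricalLaw g u * (if u.2 then 1 else 0 : ℝ) =
        #{i | w i = ℓ} / Fintype.card α := by
      rw [sum_empiricalLaw_mul]; simp [g, sum_boole]
    rw [← hF, ← hG, sum_mul_sum, Fintype.sum_prod_type]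
    exact sum_congr rfl fun u _ => sum_congr rfl fun v _ => by ring
  have h := card_filter_perm_lt_abs_sum_matchings_sub_le hα hd hσ hfix g hφ hε
  rw [hmean, ← mul_assoc] at h
  simpa [interactionCount, g, φ] using h

lemma measure_setOf_comp_le_ofReal {Ω α : Type*} [MeasurableSpace Ω] [Fintype α] {μ : Measure Ω}
    {X : Ω → α} (hmeas : ∀ a, MeasurableSet {ω | X ω = a})
    (hunif : ∀ a, μ {ω | X ω = a} = (Fintype.card α : ℝ≥0∞)⁻¹) (P : α → Prop) [DecidablePred P]
    {B : ℝ} (hB : (#{a | P a} : ℝ) ≤ Fintype.card α * B) :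
    μ {ω | P (X ω)} ≤ ENNReal.ofReal B := by
  have hunion : {ω | P (X ω)} = ⋃ a ∈ ({a | P a} : Finset α), {ω | X ω = a} := by ext; simp
  have hdisj : (({a | P a} : Finset α) : Set α).PairwiseDisjoint fun a => {ω | X ω = a} :=
    fun a _ b _ hab => Set.disjoint_left.2 fun ω ha hb => hab (ha.symm.trans hb)
  rw [hunion, measure_biUnion_finset hdisj fun a _ => hmeas a]
  simp only [hunif, sum_const, nsmul_eq_mul]
  obtain hα | hα := (Fintype.card α).eq_zero_or_pos
  · have := Fintype.card_eq_zero_iff.1 hα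
    simp
  · have hB' : (#{a | P a} : ℝ) * (Fintype.card α : ℝ)⁻¹ ≤ B := by
      rw [← div_eq_mul_inv, div_le_iff₀ (by positivity)]; linarith
    calc (#{a | P a} : ℝ≥0∞) * (Fintype.card α : ℝ≥0∞)⁻¹
        = ENNReal.ofReal ((#{a | P a} : ℝ) * (Fintype.card α : ℝ)⁻¹) := by
          rw [ENNReal.ofReal_mul (by positivity), ENNReal.ofReal_inv_of_pos (by positivity),
            ENNReal.ofReal_natCast, ENNReal.ofReal_natCast]
      _ ≤ ENNReal.ofReal B := ENNReal.ofReal_le_ofReal hB'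

lemma exists_pow_mul_exp_le (k : ℕ) {a : ℝ} (ha : 0 < a) :
    ∃ C > 0, ∀ x : ℝ, 0 ≤ x → (x + 1) ^ k * exp (-(a * x)) ≤ C * exp (-(a / 2) * x) := by
  refine ⟨k.factorial / (a / 2) ^ k * exp (a / 2), by positivity, fun x hx => ?_⟩
  have h := pow_div_factorial_le_exp (x := a / 2 * (x + 1)) (by positivity) k
  rw [div_le_iff₀ (by positivity), mul_pow] at h
  calc (x + 1) ^ k * exp (-(a * x))
      ≤ k.factorial / (a / 2) ^ k * exp (a / 2 * (x + 1)) * exp (-(a * x)) := by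
        gcongr
        rw [div_mul_eq_mul_div, le_div_iff₀ (by positivity)]; linarith
    _ = k.factorial / (a / 2) ^ k * exp (a / 2) * exp (-(a / 2) * x) := by
        rw [mul_assoc, mul_assoc, ← exp_add, ← exp_add]
        ring_nf

/-- Theorem 4.3 of the paper (convergence on the line of the gap process): for
every `ε > 0` there are constants `C, c > 0`, depending only on `ε` and the
degree `d`, such that for any `N`, `K`, count vector `n` summing to `N`,
arrangement `w` with fibers of sizes `n`, fixed-point-free involutions
`σ 1, …, σ d` of `Fin N` (perfect matchings), and `V = w ∘ π` with `π` a
uniform random permutation of `Fin N`, the quadratic interaction count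
`Q_{m,ℓ}(V) = (1/N) ∑ t, ∑ i, 1{V i = m} 1{V (σ t i) = ℓ}` satisfies
`P(|Q_{m,ℓ}(V) − d (n m / N) (n ℓ / N)| > ε) ≤ C exp (−c N)` for all `m, ℓ`. -/
theorem gap_process_concentration_on_the_line
    (d : ℕ) (hd : 0 < d) (ε : ℝ) (hε : 0 < ε) :
    ∃ C > (0 : ℝ), ∃ c > (0 : ℝ),
      ∀ (N K : ℕ), 0 < N → 0 < K →
      ∀ (σ : Fin d → Fin N → Fin N),
        (∀ t i, σ t (σ t i) = i) → (∀ t i, σ t i ≠ i) →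
      ∀ (n : Fin K → ℕ), (∑ k, n k) = N →
      ∀ (w : Fin N → Fin K),
        (∀ k, (Finset.univ.filter fun i => w i = k).card = n k) →
      ∀ (Ω : Type) (_ : MeasurableSpace Ω) (μ : Measure Ω),
        IsProbabilityMeasure μ →
      ∀ (π : Ω → Equiv.Perm (Fin N)) (V : Ω → Fin N → Fin K),
        (∀ e : Equiv.Perm (Fin N), MeasurableSet {ω | π ω = e}) →
        -- `π` is a uniformly distributed random permutation:
        (∀ e : Equiv.Perm (Fin N),
          μ {ω | π ω = e} = ((Fintype.card (Equiv.Perm (Fin N)) : ℝ≥0∞))⁻¹) →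
        -- `V` is distributed as `w ∘ π`:
        (∀ ω i, V ω i = w (π ω i)) →
      ∀ m ℓ : Fin K,
        μ {ω | ε <
            |((1 / (N : ℝ)) * ∑ t : Fin d, ∑ i : Fin N,
                (if V ω i = m then (1 : ℝ) else 0) *
                  (if V ω (σ t i) = ℓ then (1 : ℝ) else 0)) -
              (d : ℝ) * ((n m : ℝ) / (N : ℝ)) * ((n ℓ : ℝ) / (N : ℝ))|} ≤
          ENNReal.ofReal (C * Real.exp (-c * N)) := by
  obtain ⟨C, hC, hexp⟩ := exists_pow_mul_exp_le 4 (a := (ε / d) ^ 2) (by positivity)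
  refine ⟨2 * d * C, by positivity, (ε / d) ^ 2 / 2, by positivity, ?_⟩
  intro N K hN _ σ hσ hfix n _ w hw Ω _ μ _ π V hmeas huni hV m ℓ
  have hcount := card_filter_perm_lt_abs_interactionCount_sub_le (α := Fin N) (by simpa) hd hσ
    hfix w m ℓ hε.le
  simp only [Fintype.card_fin, hw] at hcount
  calc μ _ = μ {ω | ε < |interactionCount σ (w ∘ π ω) m ℓ - d * (n m / N) * (n ℓ / N)|} := by
        simp only [interactionCount, hV, Fintype.card_fin, Function.comp_apply]
    _ ≤ _ := measure_setOf_comp_le_ofReal hmeas huni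
        (fun e => ε < |interactionCount σ (w ∘ e) m ℓ - d * (n m / N) * (n ℓ / N)|) ?_
  rw [Fintype.card_perm, Fintype.card_fin]
  calc _ ≤ _ := hcount
    _ = N.factorial * (2 * d * ((N + 1) ^ 4 * Real.exp (-((ε / d) ^ 2 * N)))) := by ring
    _ ≤ N.factorial * (2 * d * (C * Real.exp (-((ε / d) ^ 2 / 2) * N))) := by
        gcongr ?_ * (2 * d * ?_)
        exact hexp N (Nat.cast_nonneg N)
    _ = _ := by ring
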